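/- Under the same setting: if μ is the invariant probability of Q, then the probability measure μ^△ on R³ defined by μ^△(dx dx₀ dx₁) = μ(dx) P(x, dx₀ dx₁) is invariant for Q^△, i.e. for every bounded measurable f: R³ → R, ∫ Q^△ f dμ^△ = ∫ f dμ^△. -/

import Mathlib

open MeasureTheory ProbabilityTheory

lemma aux_integrable_of_bounded {α : Type*} [MeasurableSpace α] (m : Measure α)
    [IsFiniteMeasure m] {g : α → ℝ} (hg : AEStronglyMeasurable g m) {C : ℝ}
    (hb : ∀ x, |g x| ≤ C) : Integrable g m :=
  ⟨hg, HasFiniteIntegral.of_bounded (C := C)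
    (ae_of_all _ (by simpa [Real.norm_eq_abs] using hb))⟩

lemma aux_bind_eq_map_snd (μ : Measure ℝ) [SFinite μ] (κ : Kernel ℝ ℝ) [IsSFiniteKernel κ] :
    μ.bind (fun x => (κ x : Measure ℝ)) = (μ ⊗ₘ κ).map Prod.snd := by
  ext s hs
  rw [Measure.bind_apply hs (κ.measurable.aemeasurable), Measure.map_apply measurable_snd hs,
    Measure.compProd_apply (measurable_snd hs)]
  rfl

lemma aux_integral_bind (μ : Measure ℝ) [IsProbabilityMeasure μ] (κ : Kernel ℝ ℝ)
    [IsMarkovKernel κ] (G : ℝ → ℝ) (hG : Measurable G) {C : ℝ} (hb : ∀ y, |G y| ≤ C) :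
    ∫ y, G y ∂(μ.bind fun x => (κ x : Measure ℝ)) = ∫ x, ∫ y, G y ∂(κ x) ∂μ := by
  rw [aux_bind_eq_map_snd, integral_map measurable_snd.aemeasurable hG.aestronglyMeasurable]
  exact Measure.integral_compProd
      (aux_integrable_of_bounded _ ((hG.comp measurable_snd).aestronglyMeasurable)
        (fun p => hb p.2))

/-- if `μ` is invariant for `Q = (1/2)(P₀+P₁)`, then
`μ^△(dx dx₀ dx₁) = μ(dx)P(x, dx₀ dx₁)` is invariant for the triangle kernel `Q^△`, i.e.
`∫ Q^△f dμ^△ = ∫ f dμ^△` for every bounded measurable `f`. -/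
theorem stmt4 (P : Kernel ℝ (ℝ × ℝ)) [IsMarkovKernel P]
    (Q : Kernel ℝ ℝ) [IsMarkovKernel Q]
    (hQ : ∀ x : ℝ, (Q x : Measure ℝ)
      = (2 : ENNReal)⁻¹ • ((P x).map Prod.fst) + (2 : ENNReal)⁻¹ • ((P x).map Prod.snd))
    (μ : Measure ℝ) [IsProbabilityMeasure μ]
    (hinv : μ.bind (fun x => (Q x : Measure ℝ)) = μ) :
    ∀ f : ℝ × ℝ × ℝ → ℝ, Measurable f → (∃ C, ∀ p, |f p| ≤ C) →
      (∫ p, (1 / 2 : ℝ) * ((∫ z, f (p.2.1, z) ∂(P p.2.1)) + ∫ z, f (p.2.2, z) ∂(P p.2.2))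
          ∂(μ.bind fun x => (P x : Measure (ℝ × ℝ)).map fun z => (x, z.1, z.2)))
        = ∫ p, f p ∂(μ.bind fun x => (P x : Measure (ℝ × ℝ)).map fun z => (x, z.1, z.2)) := by
  intro f hf hbdd
  obtain ⟨C, hC⟩ := hbdd
  have hC0 : 0 ≤ C := le_trans (abs_nonneg _) (hC (0, 0, 0))
  -- the marginal integral G
  set G : ℝ → ℝ := fun y => ∫ z, f (y, z) ∂(P y) with hGdef
  have hGmeas : Measurable G :=
    (hf.stronglyMeasurable.integral_kernel_prod_right' (κ := P)).measurable
  have hGb : ∀ y, |G y| ≤ C := by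
    intro y
    rw [← Real.norm_eq_abs]
    calc ‖∫ z, f (y, z) ∂(P y)‖ ≤ C * ((P y) Set.univ).toReal :=
          norm_integral_le_of_norm_le_const
            (ae_of_all _ fun z => by simpa [Real.norm_eq_abs] using hC (y, z))
      _ = C := by simp
  -- the triangle measure is a compProd
  have hν : (μ.bind fun x => (P x : Measure (ℝ × ℝ)).map fun z => (x, z.1, z.2)) = μ ⊗ₘ P := by
    have hm : ∀ x : ℝ, Measurable fun z : ℝ × ℝ => (x, z.1, z.2) := fun x =>
      measurable_const.prodMk (measurable_fst.prodMk measurable_snd)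
    have hmeas : Measurable fun x => (P x : Measure (ℝ × ℝ)).map fun z => (x, z.1, z.2) := by
      refine Measure.measurable_of_measurable_coe _ fun s hs => ?_
      simp_rw [fun x => Measure.map_apply (hm x) hs]
      exact Kernel.measurable_kernel_prodMk_left hs
    ext s hs
    rw [Measure.bind_apply hs hmeas.aemeasurable, Measure.compProd_apply hs]
    congr 1
    ext x
    rw [Measure.map_apply (hm x) hs]
  rw [hν]
  -- rewrite both sides with integral_compProd
  have hint1 : Integrable
      (fun p : ℝ × ℝ × ℝ => (1 / 2 : ℝ) * (G p.2.1 + G p.2.2)) (μ ⊗ₘ P) := by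
    refine aux_integrable_of_bounded _ ?_ (C := C) ?_
    · exact (((hGmeas.comp (measurable_fst.comp measurable_snd)).add
        (hGmeas.comp (measurable_snd.comp measurable_snd))).const_mul _).aestronglyMeasurable
    · intro p
      calc |(1 / 2 : ℝ) * (G p.2.1 + G p.2.2)| = (1/2) * |G p.2.1 + G p.2.2| := by
            rw [abs_mul]; norm_num
        _ ≤ (1/2) * (|G p.2.1| + |G p.2.2|) := by
            gcongr; exact abs_add_le _ _
        _ ≤ (1/2) * (C + C) := by gcongr <;> [exact hGb _; exact hGb _]
        _ = C := by ring
  have hint2 : Integrable f (μ ⊗ₘ P) :=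
    aux_integrable_of_bounded _ hf.aestronglyMeasurable hC
  rw [Measure.integral_compProd hint1, Measure.integral_compProd hint2]
  -- inner integral on the left equals ∫ G dQ x
  have hinner : ∀ x : ℝ,
      ∫ b, (1 / 2 : ℝ) * (G b.1 + G b.2) ∂(P x) = ∫ y, G y ∂(Q x) := by
    intro x
    have hi1 : Integrable (fun b : ℝ × ℝ => G b.1) (P x) :=
      aux_integrable_of_bounded _ (hGmeas.comp measurable_fst).aestronglyMeasurable
        (fun b => hGb b.1)
    have hi2 : Integrable (fun b : ℝ × ℝ => G b.2) (P x) :=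
      aux_integrable_of_bounded _ (hGmeas.comp measurable_snd).aestronglyMeasurable
        (fun b => hGb b.2)
    rw [integral_const_mul, integral_add hi1 hi2,
      ← integral_map measurable_fst.aemeasurable hGmeas.aestronglyMeasurable,
      ← integral_map measurable_snd.aemeasurable hGmeas.aestronglyMeasurable,
      hQ x, integral_add_measure, integral_smul_measure, integral_smul_measure]
    · simp only [ENNReal.toReal_inv, ENNReal.toReal_ofNat, smul_eq_mul]
      ring
    · refine Integrable.smul_measure ?_ (by simp)
      exact aux_integrable_of_bounded _
        (hGmeas.aestronglyMeasurable.mono_ac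
          (Measure.absolutelyContinuous_of_le (le_refl _))) hGb
    · refine Integrable.smul_measure ?_ (by simp)
      exact aux_integrable_of_bounded _
        (hGmeas.aestronglyMeasurable.mono_ac
          (Measure.absolutelyContinuous_of_le (le_refl _))) hGb
  calc ∫ x, ∫ b, (1 / 2 : ℝ) * ((∫ z, f ((x, b).2.1, z) ∂(P (x, b).2.1))
          + ∫ z, f ((x, b).2.2, z) ∂(P (x, b).2.2)) ∂(P x) ∂μ
      = ∫ x, ∫ y, G y ∂(Q x) ∂μ := by
        refine integral_congr_ae (ae_of_all _ fun x => ?_)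
        simpa using hinner x
    _ = ∫ y, G y ∂(μ.bind fun x => (Q x : Measure ℝ)) :=
        (aux_integral_bind μ Q G hGmeas hGb).symm
    _ = ∫ y, G y ∂μ := by rw [hinv]
    _ = ∫ a, ∫ b, f (a, b) ∂(P a) ∂μ := rfl
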